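/- arXiv:2204.13858 — 2 statements merged into one kernel-verified Lean document; each statement's English description precedes it below -/
import Mathlib

section
/- For permutations π̂ and π* on [n], the expected number of mismatches E[∑_{i∈[n]} 1{π̂_i ≠ π*_i}] equals the sum over k from 2 to n of the sum over all ordered tuples of k distinct indices (i_1,…,i_k) of the probability that π̂_{i_1} = π*_{i_2}, π̂_{i_2} = π*_{i_3}, …, π̂_{i_{k-1}} = π*_{i_k}, and π̂_{i_k} = π*_{i_1}. -/
open MeasureTheory ProbabilityTheory

noncomputable instance (n : ℕ) : MeasurableSpace (Equiv.Perm (Fin n)) := ⊤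

/-!
Put `σ = πs⁻¹ * πh ω`. The mismatches are the points moved by `σ`, and every such point `x`
has a minimal period `k ∈ [2, n]`. A `k`-cycle event holds exactly for the tuples
`(x, σ x, …, σ^(k-1) x)` with `x` of minimal period `k`, so pointwise the number of mismatches is
the number of cycle events that occur; integrating gives the identity.
-/

open Finset Function

section CycleTuples

variable {α : Type*}

def cycleTuples [Fintype α] [DecidableEq α] (f : α → α) (k : ℕ) : Finset (Fin k → α) :=
  {i | Injective i ∧ ∀ j, f (i j) = i (finRotate k j)}

lemma apply_eq_iterate_apply_zero {f : α → α} {k : ℕ} {i : Fin (k + 1) → α}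
    (hi : ∀ j, f (i j) = i (finRotate (k + 1) j)) (j : Fin (k + 1)) :
    i j = f^[j] (i 0) := by
  induction j using Fin.induction with
  | zero => rfl
  | succ j ih =>
    rw [← Fin.coeSucc_eq_succ, ← finRotate_apply, ← hi, ih, finRotate_apply, Fin.coeSucc_eq_succ,
      Fin.val_succ, Fin.val_castSucc, iterate_succ_apply']

variable [Fintype α] [DecidableEq α]

lemma mem_cycleTuples_succ_iff {f : α → α} {k : ℕ} {i : Fin (k + 1) → α} :
    i ∈ cycleTuples f (k + 1) ↔ minimalPeriod f (i 0) = k + 1 ∧ ∀ j, i j = f^[j] (i 0) := by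
  simp only [cycleTuples, mem_filter, mem_univ, true_and]
  constructor
  · rintro ⟨hinj, hi⟩
    have hiter := apply_eq_iterate_apply_zero hi
    have hper : IsPeriodicPt f (k + 1) (i 0) := by
      have := hi (Fin.last k)
      rw [finRotate_last, hiter, Fin.val_last, ← iterate_succ_apply' f] at this
      exact this
    refine ⟨?_, hiter⟩
    have hpos := hper.minimalPeriod_pos k.succ_pos
    have hle := hper.minimalPeriod_le k.succ_pos
    by_contra hne
    have hlt : minimalPeriod f (i 0) < k + 1 := lt_of_le_of_ne hle hne
    have : i ⟨_, hlt⟩ = i 0 := by rw [hiter]; exact iterate_minimalPeriod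
    exact hpos.ne' (congrArg Fin.val (hinj this))
  · rintro ⟨hper, hiter⟩
    refine ⟨fun j₁ j₂ h => ?_, fun j => ?_⟩
    · rw [hiter j₁, hiter j₂] at h
      exact Fin.ext (iterate_injOn_Iio_minimalPeriod (by simpa [hper] using j₁.is_le)
        (by simpa [hper] using j₂.is_le) h)
    · rw [hiter j, hiter (finRotate _ j), ← iterate_succ_apply' f, ← iterate_mod_minimalPeriod_eq,
        hper, finRotate_apply, Fin.val_add]
      simp

lemma card_cycleTuples_succ (f : α → α) (k : ℕ) :
    #(cycleTuples f (k + 1)) = #{x | minimalPeriod f x = k + 1} := by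
  refine card_nbij' (fun i => i 0) (fun x j => f^[j] x) ?_ ?_ ?_ ?_
  · intro i hi
    simpa using (mem_cycleTuples_succ_iff.1 hi).1
  · intro x hx
    simp only [coe_filter, mem_univ, true_and, Set.mem_ofPred_eq] at hx
    simpa [mem_cycleTuples_succ_iff] using hx
  · intro i hi
    funext j
    exact ((mem_cycleTuples_succ_iff.1 hi).2 j).symm
  · intro x _
    rfl

lemma card_ne_self_eq_sum_card_minimalPeriod (σ : Equiv.Perm α) :
    #{x | σ x ≠ x} = ∑ k ∈ Icc 2 (Fintype.card α), #{x | minimalPeriod σ x = k} := by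
  rw [card_eq_sum_card_fiberwise (f := minimalPeriod σ)]
  · refine sum_congr rfl fun k hk => ?_
    rw [filter_filter]
    refine congrArg card (filter_congr fun x _ => and_iff_right_of_imp fun hk' hx => ?_)
    rw [minimalPeriod_eq_one_iff_isFixedPt.2 hx] at hk'
    simp [← hk'] at hk
  · intro x hx
    simp only [coe_filter, mem_univ, true_and, Set.mem_ofPred_eq] at hx
    have hpos := minimalPeriod_pos_of_mem_periodicPts (σ.injective.mem_periodicPts x)
    have h1 : minimalPeriod σ x ≠ 1 := fun h => hx (minimalPeriod_eq_one_iff_isFixedPt.1 h)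
    simp only [coe_Icc, Set.mem_Icc]
    exact ⟨by omega, minimalPeriod_le_card⟩

lemma card_ne_eq_sum_card_cycleTuples (π τ : Equiv.Perm α) :
    #{x | π x ≠ τ x} = ∑ k ∈ Icc 2 (Fintype.card α),
      #{i : Fin k → α | Injective i ∧ ∀ j, π (i j) = τ (i (finRotate k j))} := by
  set σ := τ⁻¹ * π
  have hσ : ∀ x y, π x = τ y ↔ σ x = y := fun x y => by
    rw [Equiv.Perm.mul_apply, Equiv.Perm.inv_eq_iff_eq, eq_comm]
  have hfix : #{x | π x ≠ τ x} = #{x | σ x ≠ x} := by simp_rw [ne_eq, hσ]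
  simp_rw [hfix, hσ, card_ne_self_eq_sum_card_minimalPeriod σ]
  refine sum_congr rfl fun k hk => ?_
  obtain ⟨m, rfl⟩ : ∃ m, k = m + 1 := ⟨k - 1, by grind⟩
  exact (card_cycleTuples_succ σ m).symm

end CycleTuples

lemma integral_sum_indicator_one {Ω ι : Type*} [MeasurableSpace Ω] {μ : Measure Ω}
    [IsFiniteMeasure μ] {s : Finset ι} {E : ι → Set Ω} (hE : ∀ a ∈ s, MeasurableSet (E a)) :
    ∫ ω, ∑ a ∈ s, (E a).indicator 1 ω ∂μ = ∑ a ∈ s, μ.real (E a) := by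
  rw [integral_finsetSum _ fun a ha => (integrable_const 1).indicator (hE a ha)]
  exact sum_congr rfl fun a ha => integral_indicator_one (hE a ha)

/-- Cycle decomposition of the expected number of mismatches. -/
theorem stmt0 (n : ℕ) (Ω : Type*) [MeasurableSpace Ω] (P : Measure Ω)
    [IsProbabilityMeasure P] (πh : Ω → Equiv.Perm (Fin n)) (hmeas : Measurable πh)
    (πs : Equiv.Perm (Fin n)) :
    ∫ ω, ((Finset.univ.filter fun i : Fin n => πh ω i ≠ πs i).card : ℝ) ∂P =
      ∑ k ∈ Finset.Icc 2 n,
        ∑ i ∈ Finset.univ.filter (fun i : Fin k → Fin n => Function.Injective i),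
          (P {ω | ∀ j : Fin k, πh ω (i j) = πs (i (finRotate k j))}).toReal := by
  let E : (Σ k, Fin k → Fin n) → Set Ω := fun p =>
    πh ⁻¹' {σ | ∀ j, σ (p.2 j) = πs (p.2 (finRotate p.1 j))}
  have hcount (ω : Ω) : (#{i | πh ω i ≠ πs i} : ℝ) =
      ∑ p ∈ (Icc 2 n).sigma fun k => {i : Fin k → Fin n | Injective i}, (E p).indicator 1 ω := by
    rw [card_ne_eq_sum_card_cycleTuples, Fintype.card_fin, sum_sigma]
    push_cast
    refine sum_congr rfl fun k _ => ?_
    rw [← filter_filter, card_filter]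
    simp [E, Set.indicator_apply]
  rw [integral_congr_ae (ae_of_all _ hcount),
    integral_sum_indicator_one (E := E) fun _ _ => hmeas MeasurableSpace.measurableSet_top,
    sum_sigma]
  rfl
end

section
/- In the special case k = 2: for independent W ~ N(μ, I_2), Z ~ N(ν, I_2) with θμ = ν for some θ ∈ (0,1], and t = (1−ε)/2 with ε ∈ (0,1), the moment generating function satisfies E[exp(tθ Wᵀ(C−I_2)Z)] ≤ exp(−((1−ε)/8)·‖(I_2 − C)ν‖² + K·log(1/ε)) for some absolute constant K > 0, where C is the 2×2 swap matrix. -/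
/-!
With `X = W₀ - W₁` and `Y = Z₁ - Z₀` one has `Wᵀ(C - I)Z = XY`, where `X ~ N(μ₀ - μ₁, 2)` and
`Y ~ N(ν₁ - ν₀, 2)` are independent. Integrating out `Y` leaves the expectation of the exponential
of a quadratic in the Gaussian `X`, which is explicit because tilting a Gaussian density by such an
exponential gives a multiple of another Gaussian density. Using `ν = θμ`, the result is
`exp(-((1 - v)/8)‖(I - C)ν‖²) / √(1 - 4t²θ²)` with `v = (1 - 2t)²/(1 - 4t²θ²) ≤ 1 - 2t = ε`,
and `1 - 4t²θ² ≥ ε` bounds the prefactor by `ε^(-1/2)`, so `K = 1/2` works.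
-/

open Matrix MeasureTheory ProbabilityTheory

def swapMatrix : Matrix (Fin 2) (Fin 2) ℝ := !![0, 1; 1, 0]

open Real
open scoped NNReal ENNReal

lemma gaussianPDFReal_mul_exp_quadratic (m : ℝ) {v : ℝ≥0} {a : ℝ} (b : ℝ) (hv : v ≠ 0)
    (ha : 2 * a * v < 1) (x : ℝ) :
    gaussianPDFReal m v x * rexp (a * x ^ 2 + b * x) =
      (√(1 - 2 * a * v))⁻¹ * rexp ((a * m ^ 2 + b * m + v * b ^ 2 / 2) / (1 - 2 * a * v)) *
        gaussianPDFReal ((m + b * v) / (1 - 2 * a * v)) (v / (1 - 2 * a * v).toNNReal) x := by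
  have hv' : (0 : ℝ) < v := by positivity
  have hc : 0 < 1 - 2 * a * v := by linarith
  simp only [gaussianPDFReal, NNReal.coe_div, coe_toNNReal _ hc.le]
  rw [show 2 * π * (v / (1 - 2 * a * v)) = 2 * π * v / (1 - 2 * a * v) by ring,
    sqrt_div' _ hc.le, inv_div, mul_assoc, ← exp_add]
  set c := 1 - 2 * a * v with hc_def
  have hs : 0 < √c := sqrt_pos.2 hc
  calc (√(2 * π * v))⁻¹ * rexp (-(x - m) ^ 2 / (2 * v) + (a * x ^ 2 + b * x))
      = (√(2 * π * v))⁻¹ * rexp ((a * m ^ 2 + b * m + v * b ^ 2 / 2) / c +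
          -(x - (m + b * v) / c) ^ 2 / (2 * (v / c))) := by
        congr 2
        field_simp
        rw [hc_def]
        ring
    _ = _ := by
        rw [exp_add]
        field_simp

lemma lintegral_exp_quadratic_gaussianReal (m : ℝ) (v : ℝ≥0) {a : ℝ} (b : ℝ)
    (ha : 2 * a * v < 1) :
    ∫⁻ x, ENNReal.ofReal (rexp (a * x ^ 2 + b * x)) ∂gaussianReal m v =
      ENNReal.ofReal ((√(1 - 2 * a * v))⁻¹ *
        rexp ((a * m ^ 2 + b * m + v * b ^ 2 / 2) / (1 - 2 * a * v))) := by
  rcases eq_or_ne v 0 with rfl | hv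
  · simp [gaussianReal_zero_var]
  rw [gaussianReal_of_var_ne_zero _ hv,
    lintegral_withDensity_eq_lintegral_mul _ (measurable_gaussianPDF _ _) (by fun_prop)]
  have hC : 0 ≤ (√(1 - 2 * a * v))⁻¹ *
      rexp ((a * m ^ 2 + b * m + v * b ^ 2 / 2) / (1 - 2 * a * v)) := by positivity
  simp_rw [Pi.mul_apply, gaussianPDF, ← ENNReal.ofReal_mul (gaussianPDFReal_nonneg _ _ _),
    gaussianPDFReal_mul_exp_quadratic m b hv ha, ENNReal.ofReal_mul hC]
  rw [lintegral_const_mul _ (measurable_gaussianPDFReal _ _).ennreal_ofReal,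
    lintegral_gaussianPDFReal_eq_one _ (by simp [hv, ha]), mul_one]

lemma lintegral_exp_mul_gaussianReal (m : ℝ) (v : ℝ≥0) (b : ℝ) :
    ∫⁻ x, ENNReal.ofReal (rexp (b * x)) ∂gaussianReal m v =
      ENNReal.ofReal (rexp (b * m + v * b ^ 2 / 2)) := by
  simpa using lintegral_exp_quadratic_gaussianReal m v b (a := 0) (by simp)

lemma integral_exp_mul_mul_of_indepFun {Ω : Type*} [MeasurableSpace Ω] {P : Measure Ω}
    [IsFiniteMeasure P] {X Y : Ω → ℝ} {m₁ m₂ : ℝ} {v₁ v₂ : ℝ≥0} (hXY : IndepFun X Y P)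
    (hX : P.map X = gaussianReal m₁ v₁) (hY : P.map Y = gaussianReal m₂ v₂) {s : ℝ}
    (hs : s ^ 2 * v₁ * v₂ < 1) :
    ∫ ω, rexp (s * X ω * Y ω) ∂P =
      (√(1 - s ^ 2 * v₁ * v₂))⁻¹ *
        rexp ((s ^ 2 * (v₂ * m₁ ^ 2 + v₁ * m₂ ^ 2) / 2 + s * m₁ * m₂) / (1 - s ^ 2 * v₁ * v₂)) := by
  have hXm : AEMeasurable X P := AEMeasurable.of_map_ne_zero (by rw [hX]; exact NeZero.ne _)
  have hYm : AEMeasurable Y P := AEMeasurable.of_map_ne_zero (by rw [hY]; exact NeZero.ne _)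
  have hlaw : P.map (fun ω ↦ (X ω, Y ω)) = (gaussianReal m₁ v₁).prod (gaussianReal m₂ v₂) := by
    rw [(indepFun_iff_map_prod_eq_prod_map_map hXm hYm).1 hXY, hX, hY]
  have hinner (x : ℝ) : ∫⁻ y, ENNReal.ofReal (rexp (s * x * y)) ∂gaussianReal m₂ v₂ =
      ENNReal.ofReal (rexp (v₂ * s ^ 2 / 2 * x ^ 2 + s * m₂ * x)) := by
    rw [lintegral_exp_mul_gaussianReal]
    congr 2
    ring
  have hg : Measurable fun p : ℝ × ℝ ↦ rexp (s * p.1 * p.2) := by fun_prop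
  rw [integral_eq_lintegral_of_nonneg_ae (ae_of_all _ fun _ ↦ (exp_pos _).le)
      (hg.comp_aemeasurable (hXm.prodMk hYm)).aestronglyMeasurable,
    ← lintegral_map' hg.ennreal_ofReal.aemeasurable (hXm.prodMk hYm), hlaw,
    lintegral_prod _ hg.ennreal_ofReal.aemeasurable]
  simp only [hinner]
  rw [lintegral_exp_quadratic_gaussianReal _ _ _ (by linarith), ENNReal.toReal_ofReal (by positivity)]
  congr 3 <;> ring

lemma map_eval_sub_eval_pi_gaussianReal {ι : Type*} [Fintype ι] (m : ι → ℝ) (v : ι → ℝ≥0)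
    {i j : ι} (hij : i ≠ j) :
    (Measure.pi fun k ↦ gaussianReal (m k) (v k)).map (fun x ↦ x i - x j) =
      gaussianReal (m i - m j) (v i + v j) := by
  have hind : IndepFun (fun x : ι → ℝ ↦ x i) (fun x ↦ -x j)
      (Measure.pi fun k ↦ gaussianReal (m k) (v k)) :=
    ((iIndepFun_pi (X := fun _ ↦ id) fun _ ↦ aemeasurable_id).indepFun hij).comp
      measurable_id measurable_neg
  have hi := (measurePreserving_eval (fun k ↦ gaussianReal (m k) (v k)) i).map_eq
  have hj : (Measure.pi fun k ↦ gaussianReal (m k) (v k)).map (fun x ↦ -x j) =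
      gaussianReal (-m j) (v j) := by
    rw [← gaussianReal_map_neg,
      ← (measurePreserving_eval (fun k ↦ gaussianReal (m k) (v k)) j).map_eq,
      Measure.map_map (by fun_prop) (by fun_prop)]
    rfl
  rw [sub_eq_add_neg, ← gaussianReal_add_gaussianReal_of_indepFun hind hi hj]
  rfl

lemma map_apply_sub_apply_of_map_eq_pi_gaussianReal {Ω ι : Type*} [MeasurableSpace Ω]
    [Fintype ι] {P : Measure Ω} {W : Ω → ι → ℝ} {m : ι → ℝ} {v : ι → ℝ≥0}
    (hW : P.map W = Measure.pi fun k ↦ gaussianReal (m k) (v k)) {i j : ι} (hij : i ≠ j) :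
    P.map (fun ω ↦ W ω i - W ω j) = gaussianReal (m i - m j) (v i + v j) := by
  have hWm : AEMeasurable W P := AEMeasurable.of_map_ne_zero (by rw [hW]; exact NeZero.ne _)
  rw [← map_eval_sub_eval_pi_gaussianReal m v hij, ← hW,
    AEMeasurable.map_map_of_aemeasurable (by fun_prop) hWm]
  rfl

lemma swapMatrix_mulVec (z : Fin 2 → ℝ) : swapMatrix *ᵥ z = ![z 1, z 0] := by
  ext i; fin_cases i <;> simp [swapMatrix, vecHead, vecTail]

lemma dotProduct_swapMatrix_sub_one_mulVec (w z : Fin 2 → ℝ) :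
    w ⬝ᵥ (swapMatrix - 1) *ᵥ z = (w 0 - w 1) * (z 1 - z 0) := by
  rw [sub_mulVec, one_mulVec, swapMatrix_mulVec, dotProduct, Fin.sum_univ_two]
  simp only [Pi.sub_apply, cons_val_zero, cons_val_one]
  ring

lemma sum_sq_one_sub_swapMatrix_mulVec (ν : Fin 2 → ℝ) :
    ∑ i, ((1 - swapMatrix) *ᵥ ν) i ^ 2 = 2 * (ν 1 - ν 0) ^ 2 := by
  rw [sub_mulVec, one_mulVec, swapMatrix_mulVec, Fin.sum_univ_two]
  simp only [Pi.sub_apply, cons_val_zero, cons_val_one]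
  ring

lemma sq_one_sub_two_mul_div_le {t θ : ℝ} (ht0 : 0 ≤ t) (ht1 : t < 1 / 2) (hθ : θ ^ 2 ≤ 1) :
    (1 - 2 * t) ^ 2 / (1 - 4 * (t * θ) ^ 2) ≤ 1 - 2 * t := by
  have hθt : (t * θ) ^ 2 ≤ t ^ 2 := by rw [mul_pow]; exact mul_le_of_le_one_right (sq_nonneg t) hθ
  rw [div_le_iff₀ (by nlinarith)]
  nlinarith

lemma inv_sqrt_eq_exp_half_log_inv {x : ℝ} (hx : 0 < x) : (√x)⁻¹ = rexp (1 / 2 * log (1 / x)) := by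
  rw [one_div x, log_inv, ← exp_log (inv_pos.2 (sqrt_pos.2 hx)), log_inv, log_sqrt hx.le]
  ring_nf

lemma le_one_sub_four_mul_sq {θ ε : ℝ} (hθ : θ ^ 2 ≤ 1) (hε0 : 0 ≤ ε) (hε1 : ε ≤ 1) :
    ε ≤ 1 - 4 * ((1 - ε) / 2 * θ) ^ 2 := by
  have : 4 * ((1 - ε) / 2 * θ) ^ 2 = (1 - ε) ^ 2 * θ ^ 2 := by ring
  nlinarith [mul_le_of_le_one_right (sq_nonneg (1 - ε)) hθ]

lemma mgf_closed_form_le {θ ε : ℝ} (D : ℝ) (hθ : θ ^ 2 ≤ 1) (hε0 : 0 < ε) (hε1 : ε < 1) :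
    (√(1 - ((1 - ε) / 2 * θ) ^ 2 * 2 * 2))⁻¹ *
        rexp ((((1 - ε) / 2 * θ) ^ 2 * (2 * D ^ 2 + 2 * (-(θ * D)) ^ 2) / 2 +
          (1 - ε) / 2 * θ * D * -(θ * D)) / (1 - ((1 - ε) / 2 * θ) ^ 2 * 2 * 2)) ≤
      rexp (-((1 - ε) / 8) * (2 * (-(θ * D)) ^ 2) + 1 / 2 * log (1 / ε)) := by
  have hu := le_one_sub_four_mul_sq hθ hε0.le hε1.le
  set t := (1 - ε) / 2 with ht
  rw [show (t * θ) ^ 2 * 2 * 2 = 4 * (t * θ) ^ 2 by ring, neg_sq]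
  have hv := sq_one_sub_two_mul_div_le (t := t) (by linarith) (by linarith) hθ
  set c := 1 - 4 * (t * θ) ^ 2 with hc
  have hc0 : 0 < c := hε0.trans_le hu
  calc _ = (√c)⁻¹ * rexp (-((1 - (1 - 2 * t) ^ 2 / c) / 8) * (2 * (θ * D) ^ 2)) := by
        congr 2
        field_simp
        rw [hc]
        ring
    _ ≤ (√ε)⁻¹ * rexp (-((1 - ε) / 8) * (2 * (θ * D) ^ 2)) := by
        gcongr
        linarith
    _ = _ := by rw [exp_add, mul_comm, inv_sqrt_eq_exp_half_log_inv hε0]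

/-- MGF bound in the case `k = 2`: for independent `W ~ N(μ, I₂)`, `Z ~ N(ν, I₂)` with
`θμ = ν`, `θ ∈ (0,1]`, and `t = (1−ε)/2`,
`E[exp(tθ Wᵀ(C−I₂)Z)] ≤ exp(−((1−ε)/8)‖(I₂−C)ν‖² + K log(1/ε))` for an absolute
constant `K > 0`. -/
theorem stmt8 :
    ∃ K : ℝ, 0 < K ∧
      ∀ (Ω : Type) [MeasurableSpace Ω] (P : Measure Ω), IsProbabilityMeasure P →
        ∀ (W Z : Ω → Fin 2 → ℝ) (μv νv : Fin 2 → ℝ) (θ ε : ℝ),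
          0 < θ → θ ≤ 1 → 0 < ε → ε < 1 →
          Measure.map W P = (Measure.pi fun i => gaussianReal (μv i) 1) →
          Measure.map Z P = (Measure.pi fun i => gaussianReal (νv i) 1) →
          IndepFun W Z P → (∀ i, θ * μv i = νv i) →
          (∫ ω, Real.exp (((1 - ε) / 2) * θ *
              dotProduct (W ω) ((swapMatrix - 1).mulVec (Z ω))) ∂P) ≤
            Real.exp (-((1 - ε) / 8) * (∑ i, (((1 - swapMatrix).mulVec νv) i) ^ 2) +
              K * Real.log (1 / ε)) := by
  refine ⟨1 / 2, one_half_pos, ?_⟩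
  intro Ω _ P _ W Z μv νv θ ε hθ0 hθ1 hε0 hε1 hW hZ hWZ hθμ
  have hX := map_apply_sub_apply_of_map_eq_pi_gaussianReal hW (zero_ne_one' (Fin 2))
  have hY := map_apply_sub_apply_of_map_eq_pi_gaussianReal hZ (one_ne_zero' (Fin 2))
  rw [one_add_one_eq_two] at hX hY
  have hXY : IndepFun (fun ω ↦ W ω 0 - W ω 1) (fun ω ↦ Z ω 1 - Z ω 0) P :=
    hWZ.comp (φ := fun w : Fin 2 → ℝ ↦ w 0 - w 1) (ψ := fun z : Fin 2 → ℝ ↦ z 1 - z 0)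
      (by fun_prop) (by fun_prop)
  have hν : νv 1 - νv 0 = -(θ * (μv 0 - μv 1)) := by rw [← hθμ 0, ← hθμ 1]; ring
  have hθ2 : θ ^ 2 ≤ 1 := pow_le_one₀ hθ0.le hθ1
  simp_rw [dotProduct_swapMatrix_sub_one_mulVec, ← mul_assoc]
  have hs : ((1 - ε) / 2 * θ) ^ 2 * 2 * 2 < 1 := by
    linarith [le_one_sub_four_mul_sq hθ2 hε0.le hε1.le]
  rw [integral_exp_mul_mul_of_indepFun hXY hX hY (by exact_mod_cast hs),
    sum_sq_one_sub_swapMatrix_mulVec, hν]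
  push_cast
  exact mgf_closed_form_le _ hθ2 hε0 hε1
end
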